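/- Let m ∈ ℝ, s > 0 and a < b be real numbers, let μ be the normal probability measure N(m, s²) on ℝ, and let ν be the pushforward of μ under the clamping map y ↦ max(a, min(b, y)). Then for every Borel set S ⊆ ℝ: ν(S) = μ(S ∩ (a, b)) + Φ((a − m)/s)·𝟙[a ∈ S] + (1 − Φ((b − m)/s))·𝟙[b ∈ S]. In particular ν({a}) = Φ((a − m)/s), ν({b}) = 1 − Φ((b − m)/s), and ν agrees with μ on Borel subsets of the open interval (a, b). -/

import Mathlib

open MeasureTheory Real Matrix Classical

/-- The standard normal probability density function. -/
noncomputable def stdPdf (t : ℝ) : ℝ := (Real.sqrt (2 * Real.pi))⁻¹ * Real.exp (-t ^ 2 / 2)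

/-- The standard normal cumulative distribution function. -/
noncomputable def stdCdf (t : ℝ) : ℝ := ∫ u in Set.Iic t, stdPdf u

/-- The Gaussian density on `ℝᵈ` with mean `μ` and covariance matrix `S`. -/
noncomputable def gaussDensity {d : ℕ} (μ : Fin d → ℝ) (S : Matrix (Fin d) (Fin d) ℝ)
    (z : Fin d → ℝ) : ℝ :=
  (Real.sqrt ((2 * Real.pi) ^ d * S.det))⁻¹ *
    Real.exp (-(1 / 2) * ((z - μ) ⬝ᵥ (S⁻¹ *ᵥ (z - μ))))

/-!
Clamping to `[a, b]` leaves the open interval `(a, b)` in place and collapses `(-∞, a]` onto `a`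
and `[b, ∞)` onto `b`, so the pushforward of any measure is its restriction to `(a, b)` plus atoms
of masses `μ (-∞, a]` and `μ [b, ∞)` at the endpoints. For `N(m, s²)` these masses are
`Φ((a - m)/s)` and `1 - Φ((b - m)/s)`, since `N(m, s²)` is the image of `N(0, 1)` under
`x ↦ s x + m` and has no atoms.
-/

open ProbabilityTheory Set
open scoped NNReal

section Clamp

variable {α : Type*} [LinearOrder α]

lemma preimage_max_min {a b : α} (hab : a < b) (S : Set α) :
    (fun y => max a (min b y)) ⁻¹' S =
      S ∩ Ioo a b ∪ ((if a ∈ S then Iic a else ∅) ∪ (if b ∈ S then Ici b else ∅)) := by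
  ext y
  rcases le_or_gt y a with hya | hay
  · have hyb : y < b := hya.trans_lt hab
    have hclamp : max a (min b y) = a := max_eq_left (min_le_of_right_le hya)
    rw [mem_preimage, hclamp]
    by_cases ha : a ∈ S <;> by_cases hb : b ∈ S <;> simp [ha, hb, hya, hyb]
  rcases le_or_gt b y with hby | hyb
  · have hclamp : max a (min b y) = b := by rw [min_eq_left hby, max_eq_right hab.le]
    rw [mem_preimage, hclamp]
    by_cases ha : a ∈ S <;> by_cases hb : b ∈ S <;> simp [ha, hb, hby, hay]
  · have hclamp : max a (min b y) = y := by rw [min_eq_right hyb.le, max_eq_right hay.le]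
    rw [mem_preimage, hclamp]
    by_cases ha : a ∈ S <;> by_cases hb : b ∈ S <;> simp [ha, hb, hyb, hay]

variable [TopologicalSpace α] [OrderClosedTopology α] [SecondCountableTopology α]
  [MeasurableSpace α] [OpensMeasurableSpace α]

lemma map_max_min_apply (μ : Measure α) {a b : α} (hab : a < b) {S : Set α}
    (hS : MeasurableSet S) :
    μ.map (fun y => max a (min b y)) S = μ (S ∩ Ioo a b)
      + μ (Iic a) * (if a ∈ S then 1 else 0) + μ (Ici b) * (if b ∈ S then 1 else 0) := by
  have measure_ite (p : Prop) (A : Set α) :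
      μ (if p then A else ∅) = μ A * if p then 1 else 0 := by
    split_ifs <;> simp
  have hIic : MeasurableSet (if a ∈ S then Iic a else ∅) := by split_ifs <;> measurability
  have hIci : MeasurableSet (if b ∈ S then Ici b else ∅) := by split_ifs <;> measurability
  have hdisj_ends : Disjoint (if a ∈ S then Iic a else ∅) (if b ∈ S then Ici b else ∅) :=
    Disjoint.mono (by split_ifs <;> simp) (by split_ifs <;> simp)
      (Iic_disjoint_Ici.mpr hab.not_ge)
  have hdisj : Disjoint (S ∩ Ioo a b)
      ((if a ∈ S then Iic a else ∅) ∪ (if b ∈ S then Ici b else ∅)) := by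
    rw [Set.disjoint_left]
    rintro y ⟨-, hay, hyb⟩ hy
    split_ifs at hy <;> simp_all [not_le_of_gt]
  rw [Measure.map_apply (by fun_prop) hS, preimage_max_min hab,
    measure_union hdisj (hIic.union hIci), measure_union hdisj_ends hIci,
    measure_ite, measure_ite, add_assoc]

end Clamp

lemma stdPdf_eq_gaussianPDFReal : stdPdf = gaussianPDFReal 0 1 := by
  ext t
  simp [stdPdf, gaussianPDFReal]

lemma stdCdf_eq_measureReal (t : ℝ) : stdCdf t = (gaussianReal 0 1).real (Iic t) := by
  rw [measureReal_def, gaussianReal_apply_eq_integral 0 one_ne_zero, ENNReal.toReal_ofReal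
    (setIntegral_nonneg measurableSet_Iic fun x _ => gaussianPDFReal_nonneg 0 1 x),
    stdCdf, stdPdf_eq_gaussianPDFReal]

lemma gaussianReal_eq_map_affine (m : ℝ) (v : ℝ≥0) :
    gaussianReal m v = (gaussianReal 0 1).map (fun x => √v * x + m) := by
  have hcomp : (fun x : ℝ => √v * x + m) = (· + m) ∘ (√v * ·) := rfl
  rw [hcomp, ← Measure.map_map (by fun_prop) (by fun_prop), gaussianReal_map_const_mul,
    gaussianReal_map_add_const]
  congr 1
  · simp
  · ext; simp

lemma gaussianReal_Iic (m : ℝ) {v : ℝ≥0} (hv : v ≠ 0) (t : ℝ) :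
    gaussianReal m v (Iic t) = ENNReal.ofReal (stdCdf ((t - m) / √v)) := by
  have hpos : 0 < √(v : ℝ) := by positivity
  have hpre : (fun x => √v * x + m) ⁻¹' Iic t = Iic ((t - m) / √v) := by
    ext x
    simp only [mem_preimage, mem_Iic, le_div_iff₀' hpos, le_sub_iff_add_le]
  rw [gaussianReal_eq_map_affine, Measure.map_apply (by fun_prop) measurableSet_Iic, hpre,
    stdCdf_eq_measureReal, ofReal_measureReal]

lemma gaussianReal_Ici (m : ℝ) {v : ℝ≥0} (hv : v ≠ 0) (t : ℝ) :
    gaussianReal m v (Ici t) = ENNReal.ofReal (1 - stdCdf ((t - m) / √v)) := by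
  have := nullSingletonClass_gaussianReal (μ := m) hv
  rw [← compl_Iio, prob_compl_eq_one_sub measurableSet_Iio, measure_congr Iio_ae_eq_Iic,
    gaussianReal_Iic m hv,
    ENNReal.ofReal_sub _ (by rw [stdCdf_eq_measureReal]; positivity), ENNReal.ofReal_one]

theorem censored_normal_measure_decomposition (m s a b : ℝ) (hs : 0 < s) (hab : a < b)
    (μ : Measure ℝ) (hμ : μ = ProbabilityTheory.gaussianReal m ⟨s ^ 2, sq_nonneg s⟩)
    (ν : Measure ℝ) (hν : ν = μ.map (fun y => max a (min b y))) :
    (∀ S : Set ℝ, MeasurableSet S →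
        ν S = μ (S ∩ Set.Ioo a b)
          + ENNReal.ofReal (stdCdf ((a - m) / s)) * (if a ∈ S then 1 else 0)
          + ENNReal.ofReal (1 - stdCdf ((b - m) / s)) * (if b ∈ S then 1 else 0))
      ∧ ν {a} = ENNReal.ofReal (stdCdf ((a - m) / s))
      ∧ ν {b} = ENNReal.ofReal (1 - stdCdf ((b - m) / s))
      ∧ ∀ S : Set ℝ, MeasurableSet S → S ⊆ Set.Ioo a b → ν S = μ S := by
  obtain ⟨v, hv_sq⟩ : ∃ v : ℝ≥0, (v : ℝ) = s ^ 2 := ⟨⟨s ^ 2, sq_nonneg s⟩, rfl⟩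
  have hμv : μ = gaussianReal m v := by rw [hμ]; exact congrArg _ (Subtype.ext hv_sq.symm)
  have hv : v ≠ 0 := by rw [← NNReal.coe_ne_zero, hv_sq]; positivity
  have hsd : √(v : ℝ) = s := by rw [hv_sq, Real.sqrt_sq hs.le]
  have hIic : μ (Iic a) = ENNReal.ofReal (stdCdf ((a - m) / s)) := by
    rw [hμv, gaussianReal_Iic m hv, hsd]
  have hIci : μ (Ici b) = ENNReal.ofReal (1 - stdCdf ((b - m) / s)) := by
    rw [hμv, gaussianReal_Ici m hv, hsd]
  subst hν
  have decomp (S : Set ℝ) (hS : MeasurableSet S) := hIic ▸ hIci ▸ map_max_min_apply μ hab hS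
  refine ⟨decomp, ?_, ?_, fun S hS hsub => ?_⟩
  · simp [decomp _ (measurableSet_singleton a), hab.ne']
  · simp [decomp _ (measurableSet_singleton b), hab.ne]
  · have ha : a ∉ S := fun h => lt_irrefl a (hsub h).1
    have hb : b ∉ S := fun h => lt_irrefl b (hsub h).2
    simp [decomp S hS, ha, hb, inter_eq_left.mpr hsub]
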